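/- arXiv:1910.09816 — 5 statements merged into one kernel-verified Lean document; each statement's English description precedes it below -/
import Mathlib

section
/- Let (A,φ) be a PCA over Set and let I be an assembly over (A,φ). Then a subset U ⊆ |I| × A belongs to φ_I if and only if there exists V ∈ φ such that for all i ∈ |I|, r ∈ V and a ∈ A with E_I(i,a): ra is defined and (i, ra) ∈ U. -/
/-!
The sets `U` described on the right-hand side (those into which one `V ∈ φ` maps `E_I`
fiberwise) form a fiberwise filter: fiberwise application of two of them is realized by
`λuvx. ux(vx)` applied to their witnesses. This filter contains `E_I` (witnessed by an
identity realizer) and each `|I| × V` (witnessed by `λvx. v` applied to `V`), so it contains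
the least such filter `φ_I`. Conversely, if `V` witnesses `U`, then `U` contains the fiberwise
application of `|I| × V` to `E_I`, which lies in `φ_I`.
-/

open CategoryTheory

namespace PcaPaper

/-- A partial binary application on `A`. -/
abbrev PApp (A : Type) := A → A → Option A

variable {A B C : Type}

/-- Definedness of the application of inhabited subsets. -/
def SubDef (app : PApp A) (U V : Set A) : Prop :=
  ∀ a ∈ U, ∀ b ∈ V, (app a b).isSome

/-- Application of subsets. -/
def SubApp (app : PApp A) (U V : Set A) : Set A :=
  {c | ∃ a ∈ U, ∃ b ∈ V, app a b = some c}

/-- Terms with `n` variables, built from variables by application. -/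
inductive Term (n : ℕ) : Type
  | var : Fin n → Term n
  | op : Term n → Term n → Term n

/-- Evaluation of a term at a vector of elements, as a partial function. -/
def Term.eval (app : PApp A) : {n : ℕ} → Term n → (Fin n → A) → Option A
  | _, .var i, ρ => some (ρ i)
  | _, .op s t, ρ => (Term.eval app s ρ).bind fun x => (Term.eval app t ρ).bind fun y => app x y

/-- Evaluation of a term at a vector of subsets. -/
def Term.subEval (app : PApp A) : {n : ℕ} → Term n → (Fin n → Set A) → Set A
  | _, .var i, ρ => ρ i
  | _, .op s t, ρ => SubApp app (Term.subEval app s ρ) (Term.subEval app t ρ)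

/-- Definedness of the evaluation of a term at a vector of subsets. -/
def Term.subDef (app : PApp A) : {n : ℕ} → Term n → (Fin n → Set A) → Prop
  | _, .var _, _ => True
  | _, .op s t, ρ => Term.subDef app s ρ ∧ Term.subDef app t ρ ∧
      SubDef app (Term.subEval app s ρ) (Term.subEval app t ρ)

/-- `r · a 0 · … · a (k-1)`, associated to the left. -/
def appVec (app : PApp A) (r : A) : (k : ℕ) → (Fin k → A) → Option A
  | 0, _ => some r
  | k + 1, a => (appVec app r k fun i => a i.castSucc).bind fun s => app s (a (Fin.last k))

/-- `U` realizes `λ x₀ … xₙ. t`. -/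
def Realizes (app : PApp A) (U : Set A) {n : ℕ} (t : Term (n + 1)) : Prop :=
  ∀ r ∈ U, ∀ a : Fin (n + 1) → A,
    (appVec app r n fun i => a i.castSucc).isSome ∧
    ∀ b, Term.eval app t a = some b → appVec app r (n + 1) a = some b

/-- A filter of inhabited subsets on a partial applicative structure. -/
structure IsPcaFilter (app : PApp A) (φ : Set (Set A)) : Prop where
  nonempty : ∀ U ∈ φ, U.Nonempty
  upward : ∀ U ∈ φ, ∀ V : Set A, U ⊆ V → V ∈ φ
  appClosed : ∀ U ∈ φ, ∀ V ∈ φ, SubDef app U V → SubApp app U V ∈ φ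

/-- Combinatorial completeness of a set of subsets. -/
def CombComplete (app : PApp A) (G : Set (Set A)) : Prop :=
  ∀ (n : ℕ) (t : Term (n + 1)), ∃ U ∈ G, Realizes app U t

/-- The least filter containing `G`. -/
def genFilter (app : PApp A) (G : Set (Set A)) : Set (Set A) :=
  ⋂₀ {ψ | IsPcaFilter app ψ ∧ G ⊆ ψ}

/-- A (relative) PCA over the base category `Set`: a nonempty set with a partial
binary application and a combinatorially complete filter of inhabited subsets. -/
structure PCA (A : Type) where
  app : PApp A
  nonemptyCarrier : Nonempty A
  filt : Set (Set A)
  isFilter : IsPcaFilter app filt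
  complete : CombComplete app filt

/- ### Helper lemmas -/

lemma isSome_bind_left {α β : Type} {o : Option α} {f : α → Option β}
    (h : (o.bind f).isSome) : o.isSome := by
  cases o <;> simp_all

lemma appVec_two_pre (app : PApp A) (r u v x : A) :
    (appVec app r 2 fun i => (![u, v, x] : Fin 3 → A) i.castSucc)
      = (app r u).bind fun s => app s v := rfl

lemma appVec_three_cons (app : PApp A) (r u v x : A) :
    appVec app r (2 + 1) ![u, v, x]
      = ((app r u).bind fun s => app s v).bind fun s => app s x := rfl

lemma eval_comp_term (app : PApp A) (u v x : A) :
    Term.eval app (Term.op (.var 1) (.op (.var 0) (.var 2))) ![u, v, x]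
      = (app u x).bind fun y => app v y := by
  simp [Term.eval]

lemma eval_app2_term (app : PApp A) (u v x : A) :
    Term.eval app (Term.op (.op (.var 0) (.var 1)) (.var 2)) ![u, v, x]
      = (app u v).bind fun d => app d x := by
  simp [Term.eval]

lemma filt_nonempty (P : PCA A) : ∃ U, U ∈ P.filt := by
  obtain ⟨U, hU, -⟩ := P.complete 0 (.var 0)
  exact ⟨U, hU⟩

lemma univ_mem_filt (P : PCA A) : (Set.univ : Set A) ∈ P.filt := by
  obtain ⟨U, hU⟩ := filt_nonempty P
  exact P.isFilter.upward U hU _ (Set.subset_univ U)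

lemma exists_ireal (P : PCA A) :
    ∃ U ∈ P.filt, ∀ r ∈ U, ∀ a : A, P.app r a = some a := by
  obtain ⟨U, hU, hreal⟩ := P.complete 0 (.var 0)
  refine ⟨U, hU, fun r hr a => ?_⟩
  have h := (hreal r hr fun _ => a).2 a (by simp [Term.eval])
  simpa [appVec] using h

lemma realizes3_chain (P : PCA A) {T : Set A} {t : Term (2 + 1)}
    (hreal : Realizes P.app T t) {r : A} (hr : r ∈ T) (u v : A) :
    ∃ s w, P.app r u = some s ∧ P.app s v = some w := by
  have h1 : ((P.app r u).bind fun s => P.app s v).isSome := by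
    have h := (hreal r hr ![u, v, v]).1
    rwa [appVec_two_pre] at h
  cases hru : P.app r u with
  | none => rw [hru] at h1; simp at h1
  | some s =>
    rw [hru] at h1
    simp only [Option.bind_some] at h1
    obtain ⟨w, hw⟩ := Option.isSome_iff_exists.mp h1
    exact ⟨s, w, rfl, hw⟩

lemma exists_tracker3 (P : PCA A) (t : Term (2 + 1)) {U V : Set A}
    (hU : U ∈ P.filt) (hV : V ∈ P.filt) :
    ∃ W ∈ P.filt, ∀ w ∈ W, ∃ u ∈ U, ∃ v ∈ V,
      ∀ x c : A, Term.eval P.app t ![u, v, x] = some c → P.app w x = some c := by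
  obtain ⟨T, hT, hreal⟩ := P.complete 2 t
  have hdef1 : SubDef P.app T U := by
    intro r hr u _
    obtain ⟨s, w, hs, -⟩ := realizes3_chain P hreal hr u u
    simp [hs]
  have hTU := P.isFilter.appClosed T hT U hU hdef1
  have hdef2 : SubDef P.app (SubApp P.app T U) V := by
    rintro s ⟨r, hr, u, hu, hru⟩ v _
    obtain ⟨s', w, hs', hw⟩ := realizes3_chain P hreal hr u v
    rw [hru] at hs'
    injection hs' with h
    subst h
    simp [hw]
  refine ⟨SubApp P.app (SubApp P.app T U) V,
    P.isFilter.appClosed _ hTU V hV hdef2, ?_⟩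
  rintro w ⟨s, ⟨r, hr, u, hu, hru⟩, v, hv, hsv⟩
  refine ⟨u, hu, v, hv, fun x c hc => ?_⟩
  have h2 : appVec P.app r (2 + 1) ![u, v, x] = some c := (hreal r hr ![u, v, x]).2 c hc
  rw [appVec_three_cons, hru] at h2
  simp only [Option.bind_some] at h2
  rw [hsv] at h2
  simpa using h2

/- ### Assemblies -/

/-- An assembly over a PCA `(A, φ)`. -/
structure Asm {A : Type} (P : PCA A) : Type 1 where
  carrier : Type
  E : carrier → A → Prop
  total : ∀ x, ∃ a, E x a

/-- `U` tracks the function `f` between (the carriers of) two assemblies. -/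
def Tracks (P : PCA A) {X Y : Asm P} (U : Set A) (f : X.carrier → Y.carrier) : Prop :=
  ∀ x a r, X.E x a → r ∈ U → ∃ b, P.app r a = some b ∧ Y.E (f x) b

/-- The category of assemblies over a PCA. -/
instance asmCategory (P : PCA A) : Category (Asm P) where
  Hom X Y := {f : X.carrier → Y.carrier // ∃ U ∈ P.filt, Tracks P U f}
  id X := ⟨fun x => x, by
    obtain ⟨U, hU, hI⟩ := exists_ireal P
    exact ⟨U, hU, fun x a r hx hr => ⟨a, hI r hr a, hx⟩⟩⟩
  comp {X Y Z} f g := ⟨fun x => g.1 (f.1 x), by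
    obtain ⟨U, hU, hf⟩ := f.2
    obtain ⟨V, hV, hg⟩ := g.2
    obtain ⟨W, hW, hkey⟩ := exists_tracker3 P
      (Term.op (.var 1) (.op (.var 0) (.var 2))) hU hV
    refine ⟨W, hW, fun x a w hx hw => ?_⟩
    obtain ⟨u, hu, v, hv, key⟩ := hkey w hw
    obtain ⟨b, hb, hYb⟩ := hf x a u hx hu
    obtain ⟨c, hc, hZc⟩ := hg (f.1 x) b v hYb hv
    refine ⟨c, key a c ?_, hZc⟩
    rw [eval_comp_term, hb]
    simpa using hc⟩
  id_comp f := Subtype.ext rfl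
  comp_id f := Subtype.ext rfl
  assoc f g h := Subtype.ext rfl

/-- The global-sections-like functor `Γ : Asm(A,φ) ⥤ Set`. -/
def Gam (P : PCA A) : Asm P ⥤ Type where
  obj X := X.carrier
  map f := TypeCat.ofHom f.1
  map_id _ := rfl
  map_comp _ _ := rfl

/-- The constant-object assembly `∇ Y`. -/
def nablaObj (P : PCA A) (Y : Type) : Asm P where
  carrier := Y
  E := fun _ _ => True
  total := fun _ => P.nonemptyCarrier.elim fun a => ⟨a, trivial⟩

/-- The functor `∇ : Set ⥤ Asm(A,φ)`. -/
def Nab (P : PCA A) : Type ⥤ Asm P where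
  obj Y := nablaObj P Y
  map {Y Z} f := ⟨f, by
    obtain ⟨U, hU, hI⟩ := exists_ireal P
    exact ⟨U, hU, fun y a r _ hr => ⟨a, hI r hr a, trivial⟩⟩⟩
  map_id _ := Subtype.ext rfl
  map_comp _ _ := Subtype.ext rfl

/- ### Applicative morphisms -/

/-- The image of a subset under a relation. -/
def relImage (f : A → B → Prop) (V : Set A) : Set B :=
  {b | ∃ a ∈ V, f a b}

/-- `U` tracks the relation `f` as an applicative (pre)morphism. -/
def Tracks₂ (appA : PApp A) (appB : PApp B) (U : Set B) (f : A → B → Prop) : Prop :=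
  ∀ a a' c, appA a a' = some c → ∀ b b', f a b → f a' b' → ∀ r ∈ U,
    ∃ d e, appB r b = some d ∧ appB d b' = some e ∧ f c e

/-- `f ⊆ A × B` is an applicative morphism `(A,φ) → (B,ψ)`. -/
structure IsAppMor (appA : PApp A) (φ : Set (Set A)) (appB : PApp B) (ψ : Set (Set B))
    (f : A → B → Prop) : Prop where
  total : ∀ a, ∃ b, f a b
  tracked : ∃ U ∈ ψ, Tracks₂ appA appB U f
  image : ∀ V ∈ φ, relImage f V ∈ ψ

/-- The preorder `f ≤ f'` on relations `A × B`, relative to `(B,ψ)`. -/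
def RelLe (appB : PApp B) (ψ : Set (Set B)) (f f' : A → B → Prop) : Prop :=
  ∃ U ∈ ψ, ∀ a b, f a b → ∀ r ∈ U, ∃ c, appB r b = some c ∧ f' a c

/-- Relational composition: `(RelComp g f) a c ↔ ∃ b, f a b ∧ g b c`. -/
def RelComp (g : B → C → Prop) (f : A → B → Prop) : A → C → Prop :=
  fun a c => ∃ b, f a b ∧ g b c

/-- The diagonal (identity) relation `δ_A`. -/
def relId (A : Type) : A → A → Prop := fun a b => a = b

/- ### The functor Asm(f) induced by an applicative morphism -/

/-- The action of an applicative morphism on an assembly. -/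
def asmObj (P : PCA A) (Q : PCA B) (f : A → B → Prop) (htot : ∀ a, ∃ b, f a b)
    (X : Asm P) : Asm Q where
  carrier := X.carrier
  E := fun x b => ∃ a, X.E x a ∧ f a b
  total := fun x => by
    obtain ⟨a, ha⟩ := X.total x
    obtain ⟨b, hb⟩ := htot a
    exact ⟨b, a, ha, hb⟩

lemma tracks_asmMap {P : PCA A} {Q : PCA B} {f : A → B → Prop}
    (hf : IsAppMor P.app P.filt Q.app Q.filt f) {X Y : Asm P}
    (g : X.carrier → Y.carrier) (hg : ∃ U ∈ P.filt, Tracks P U g) :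
    ∃ W ∈ Q.filt,
      Tracks Q (X := asmObj P Q f hf.total X) (Y := asmObj P Q f hf.total Y) W g := by
  obtain ⟨U, hU, hgU⟩ := hg
  obtain ⟨T, hT, hfT⟩ := hf.tracked
  have hfU : relImage f U ∈ Q.filt := hf.image U hU
  obtain ⟨W, hW, hkey⟩ := exists_tracker3 Q
    (Term.op (.op (.var 0) (.var 1)) (.var 2)) hT hfU
  refine ⟨W, hW, ?_⟩
  rintro x b w ⟨a, hxa, hab⟩ hw
  obtain ⟨v, hv, y, hy, key⟩ := hkey w hw
  obtain ⟨u, hu, huy⟩ := hy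
  obtain ⟨a', ha', hEa'⟩ := hgU x a u hxa hu
  obtain ⟨d, e, hd, he, hfe⟩ := hfT u a a' ha' y b huy hab v hv
  refine ⟨e, key b e ?_, a', hEa', hfe⟩
  rw [eval_app2_term, hd]
  simpa using he

/-- The functor `Asm(f) : Asm(A,φ) ⥤ Asm(B,ψ)` induced by an applicative morphism. -/
def asmFunctor {P : PCA A} {Q : PCA B} {f : A → B → Prop}
    (hf : IsAppMor P.app P.filt Q.app Q.filt f) : Asm P ⥤ Asm Q where
  obj X := asmObj P Q f hf.total X
  map {X Y} g := ⟨g.1, tracks_asmMap hf g.1 g.2⟩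
  map_id _ := Subtype.ext rfl
  map_comp _ _ := Subtype.ext rfl
/- ### Products of PASs -/

/-- Coordinatewise partial application on `A × B`. -/
def prodApp (appA : PApp A) (appB : PApp B) : PApp (A × B) := fun p q =>
  (appA p.1 q.1).bind fun x => (appB p.2 q.2).bind fun y => some (x, y)

/-- The set `φ × ψ` of rectangles `U ×ˢ V` with `U ∈ φ` and `V ∈ ψ`. -/
def prodFiltSet (φ : Set (Set A)) (ψ : Set (Set B)) : Set (Set (A × B)) :=
  {W | ∃ U ∈ φ, ∃ V ∈ ψ, W = U ×ˢ V}

/-- The filter `⟨φ × ψ⟩` of the pseudocoproduct of two PCAs. -/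
def prodFilt (P : PCA A) (Q : PCA B) : Set (Set (A × B)) :=
  genFilter (prodApp P.app Q.app) (prodFiltSet P.filt Q.filt)

/- ### Quasi-surjectivity and computational density -/

/-- A quasi-surjective applicative morphism. -/
def QuasiSurjective (P : PCA A) (Q : PCA B) (f : A → B → Prop) : Prop :=
  ∃ N ∈ Q.filt, ∀ U ∈ Q.filt, ∃ V ∈ P.filt,
    ∀ n ∈ N, ∀ b ∈ relImage f V, ∃ c, Q.app n b = some c ∧ c ∈ U

/-- A computationally dense applicative morphism. -/
def CompDense (P : PCA A) (Q : PCA B) (f : A → B → Prop) : Prop :=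
  ∃ M ∈ Q.filt, ∀ U ∈ Q.filt, ∃ V ∈ P.filt,
    (∀ r ∈ V, ∀ a : A, (P.app r a).isSome) ∧
    (∀ r ∈ V, ∀ a a', P.app r a = some a' →
      (∀ u ∈ U, ∀ b, f a b → (Q.app u b).isSome) →
      ∀ m ∈ M, ∀ b', f a' b' →
        ∃ c, Q.app m b' = some c ∧ ∃ u ∈ U, ∃ b'', f a b'' ∧ Q.app u b'' = some c)

/- ### Slicing: fiberwise filters over an assembly -/

/-- Fiberwise definedness of the application of two subsets of `I × A`. -/
def fibSubDef (app : PApp A) {I : Type} (U V : Set (I × A)) : Prop :=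
  ∀ i r s, (i, r) ∈ U → (i, s) ∈ V → (app r s).isSome

/-- Fiberwise application of two subsets of `I × A`. -/
def fibSubApp (app : PApp A) {I : Type} (U V : Set (I × A)) : Set (I × A) :=
  {p | ∃ r s, (p.1, r) ∈ U ∧ (p.1, s) ∈ V ∧ app r s = some p.2}

/-- A fiberwise filter over `I`. -/
structure IsFibFilter (app : PApp A) (I : Type) (Ψ : Set (Set (I × A))) : Prop where
  inhab : ∀ U ∈ Ψ, ∀ i : I, ∃ a, (i, a) ∈ U
  upward : ∀ U ∈ Ψ, ∀ V : Set (I × A), U ⊆ V → V ∈ Ψ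
  appClosed : ∀ U ∈ Ψ, ∀ V ∈ Ψ, fibSubDef app U V → fibSubApp app U V ∈ Ψ

/-- The filter `φ_I` of the slice PCA over an assembly `I`: the least fiberwise filter
containing `E_I` and all sets `|I| × V` for `V ∈ φ`. -/
def sliceFilt (P : PCA A) (I : Asm P) : Set (Set (I.carrier × A)) :=
  ⋂₀ {Ψ | IsFibFilter P.app I.carrier Ψ ∧ {p : I.carrier × A | I.E p.1 p.2} ∈ Ψ ∧
      ∀ V ∈ P.filt, {p : I.carrier × A | p.2 ∈ V} ∈ Ψ}

lemma sliceFilt_upward {P : PCA A} {I : Asm P} {U V : Set (I.carrier × A)}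
    (hU : U ∈ sliceFilt P I) (hUV : U ⊆ V) : V ∈ sliceFilt P I := by
  rw [sliceFilt, Set.mem_sInter] at hU ⊢
  intro Ψ hΨ
  exact hΨ.1.upward U (hU Ψ hΨ) V hUV

lemma sliceFilt_appClosed {P : PCA A} {I : Asm P} {U V : Set (I.carrier × A)}
    (hU : U ∈ sliceFilt P I) (hV : V ∈ sliceFilt P I) (hdef : fibSubDef P.app U V) :
    fibSubApp P.app U V ∈ sliceFilt P I := by
  rw [sliceFilt, Set.mem_sInter] at hU hV ⊢
  intro Ψ hΨ
  exact hΨ.1.appClosed U (hU Ψ hΨ) V (hV Ψ hΨ) hdef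

lemma base_mem_sliceFilt {P : PCA A} {I : Asm P} {V : Set A} (hV : V ∈ P.filt) :
    {p : I.carrier × A | p.2 ∈ V} ∈ sliceFilt P I := by
  rw [sliceFilt, Set.mem_sInter]
  intro Ψ hΨ
  exact hΨ.2.2 V hV

lemma EI_mem_sliceFilt (P : PCA A) (I : Asm P) :
    {p : I.carrier × A | I.E p.1 p.2} ∈ sliceFilt P I := by
  rw [sliceFilt, Set.mem_sInter]
  intro Ψ hΨ
  exact hΨ.2.1

lemma exists_fib_tracker3 (P : PCA A) (I : Asm P) (t : Term (2 + 1))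
    {U V : Set (I.carrier × A)} (hU : U ∈ sliceFilt P I) (hV : V ∈ sliceFilt P I) :
    ∃ W ∈ sliceFilt P I, ∀ i w, (i, w) ∈ W → ∃ u v, (i, u) ∈ U ∧ (i, v) ∈ V ∧
      ∀ x c : A, Term.eval P.app t ![u, v, x] = some c → P.app w x = some c := by
  obtain ⟨T, hT, hreal⟩ := P.complete 2 t
  have hT' : {p : I.carrier × A | p.2 ∈ T} ∈ sliceFilt P I := base_mem_sliceFilt hT
  have hdef1 : fibSubDef P.app {p : I.carrier × A | p.2 ∈ T} U := by
    intro i r s hr _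
    obtain ⟨s', w', h1, -⟩ := realizes3_chain P hreal hr s s
    simp [h1]
  have h1mem := sliceFilt_appClosed hT' hU hdef1
  have hdef2 : fibSubDef P.app (fibSubApp P.app {p : I.carrier × A | p.2 ∈ T} U) V := by
    rintro i s v ⟨r, u, hr, hu, hru⟩ _
    obtain ⟨s', w', hs', hw'⟩ := realizes3_chain P hreal hr u v
    rw [hru] at hs'
    injection hs' with h
    subst h
    simp [hw']
  refine ⟨_, sliceFilt_appClosed h1mem hV hdef2, ?_⟩
  rintro i w ⟨s, v, ⟨r, u, hr, hu, hru⟩, hv, hsv⟩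
  refine ⟨u, v, hu, hv, fun x c hc => ?_⟩
  have h2 : appVec P.app r (2 + 1) ![u, v, x] = some c := (hreal r hr ![u, v, x]).2 c hc
  rw [appVec_three_cons, hru] at h2
  simp only [Option.bind_some] at h2
  rw [hsv] at h2
  simpa using h2

/- ### The category of assemblies over the slice PCA `(A,φ)/I` -/

/-- Assemblies over the slice PCA `(A,φ)/I`. -/
structure SliceAsm (P : PCA A) (I : Asm P) : Type 1 where
  carrier : Type
  k : carrier → I.carrier
  E : carrier → A → Prop
  total : ∀ x, ∃ a, E x a

/-- Fiberwise tracking for morphisms of assemblies over `(A,φ)/I`. -/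
def SliceTracks (P : PCA A) (I : Asm P) {X Y : SliceAsm P I} (U : Set (I.carrier × A))
    (f : X.carrier → Y.carrier) : Prop :=
  ∀ x a r, X.E x a → (X.k x, r) ∈ U → ∃ b, P.app r a = some b ∧ Y.E (f x) b

instance sliceAsmCategory (P : PCA A) (I : Asm P) : Category (SliceAsm P I) where
  Hom X Y := {f : X.carrier → Y.carrier //
    (∀ x, Y.k (f x) = X.k x) ∧ ∃ U ∈ sliceFilt P I, SliceTracks P I U f}
  id X := ⟨fun x => x, fun _ => rfl, by
    obtain ⟨U, hU, hI⟩ := exists_ireal P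
    exact ⟨{p | p.2 ∈ U}, base_mem_sliceFilt hU,
      fun x a r hx hr => ⟨a, hI r hr a, hx⟩⟩⟩
  comp {X Y Z} f g := ⟨fun x => g.1 (f.1 x), fun x => (g.2.1 (f.1 x)).trans (f.2.1 x), by
    obtain ⟨U, hU, hf⟩ := f.2.2
    obtain ⟨V, hV, hg⟩ := g.2.2
    obtain ⟨W, hW, hkey⟩ := exists_fib_tracker3 P I
      (Term.op (.var 1) (.op (.var 0) (.var 2))) hU hV
    refine ⟨W, hW, fun x a w hx hw => ?_⟩
    obtain ⟨u, v, hu, hv, key⟩ := hkey (X.k x) w hw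
    obtain ⟨b, hb, hYb⟩ := hf x a u hx hu
    have hv' : (Y.k (f.1 x), v) ∈ V := by rw [f.2.1 x]; exact hv
    obtain ⟨c, hc, hZc⟩ := hg (f.1 x) b v hYb hv'
    refine ⟨c, key a c ?_, hZc⟩
    rw [eval_comp_term, hb]
    simpa using hc⟩
  id_comp f := Subtype.ext rfl
  comp_id f := Subtype.ext rfl
  assoc f g h := Subtype.ext rfl

/- ### Families of assemblies (products of PCAs) -/

/-- The category of families of assemblies over a family of PCAs, with uniformly
tracked families of morphisms; this is the category of assemblies over the product
PCA of the family, taken over the product of the base categories. -/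
structure FamAsm {I : Type} {A : I → Type} (P : ∀ i, PCA (A i)) : Type 1 where
  obj : ∀ i, Asm (P i)

instance famAsmCategory {I : Type} {A : I → Type} (P : ∀ i, PCA (A i)) :
    Category (FamAsm P) where
  Hom X Y := {f : ∀ i, (X.obj i).carrier → (Y.obj i).carrier //
    ∃ U : ∀ i, Set (A i), (∀ i, U i ∈ (P i).filt) ∧ ∀ i, Tracks (P i) (U i) (f i)}
  id X := ⟨fun i x => x, by
    choose U hU using fun i => exists_ireal (P i)
    exact ⟨U, fun i => (hU i).1, fun i x a r hx hr => ⟨a, (hU i).2 r hr a, hx⟩⟩⟩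
  comp {X Y Z} f g := ⟨fun i x => g.1 i (f.1 i x), by
    obtain ⟨U, hU, hf⟩ := f.2
    obtain ⟨V, hV, hg⟩ := g.2
    choose W hW using fun i => exists_tracker3 (P i)
      (Term.op (.var 1) (.op (.var 0) (.var 2))) (hU i) (hV i)
    refine ⟨W, fun i => (hW i).1, fun i x a w hx hw => ?_⟩
    obtain ⟨u, hu, v, hv, key⟩ := (hW i).2 w hw
    obtain ⟨b, hb, hYb⟩ := hf i x a u hx hu
    obtain ⟨c, hc, hZc⟩ := hg i (f.1 i x) b v hYb hv
    refine ⟨c, key a c ?_, hZc⟩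
    rw [eval_comp_term, hb]
    simpa using hc⟩
  id_comp f := Subtype.ext rfl
  comp_id f := Subtype.ext rfl
  assoc f g h := Subtype.ext rfl

lemma eval_s_term (app : PApp A) (u v x : A) :
    Term.eval app (Term.op (.op (.var 0) (.var 2)) (.op (.var 1) (.var 2))) ![u, v, x]
      = (app u x).bind fun d => (app v x).bind fun e => app d e := by
  simp [Term.eval]

lemma exists_const_tracker (P : PCA A) {V : Set A} (hV : V ∈ P.filt) :
    ∃ W ∈ P.filt, ∀ w ∈ W, ∀ a : A, ∃ b ∈ V, P.app w a = some b := by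
  obtain ⟨W, hW, hkey⟩ := exists_tracker3 P (.var 0) hV hV
  refine ⟨W, hW, fun w hw a => ?_⟩
  obtain ⟨u, hu, _, _, key⟩ := hkey w hw
  exact ⟨u, hu, key a u (by simp [Term.eval])⟩

def uniformFilt (P : PCA A) (I : Asm P) : Set (Set (I.carrier × A)) :=
  {U | ∃ V ∈ P.filt, ∀ i r a, r ∈ V → I.E i a →
    ∃ b, P.app r a = some b ∧ (i, b) ∈ U}

section UniformFilt

variable {P : PCA A} {I : Asm P}

lemma uniformFilt_inhab {U : Set (I.carrier × A)} (hU : U ∈ uniformFilt P I)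
    (i : I.carrier) : ∃ b, (i, b) ∈ U := by
  obtain ⟨V, hV, h⟩ := hU
  obtain ⟨r, hr⟩ := P.isFilter.nonempty V hV
  obtain ⟨a, ha⟩ := I.total i
  obtain ⟨b, -, hb⟩ := h i r a hr ha
  exact ⟨b, hb⟩

lemma uniformFilt_upward {U W : Set (I.carrier × A)} (hU : U ∈ uniformFilt P I) (hUW : U ⊆ W) :
    W ∈ uniformFilt P I := by
  obtain ⟨V, hV, h⟩ := hU
  refine ⟨V, hV, fun i r a hr ha => ?_⟩
  obtain ⟨b, hab, hb⟩ := h i r a hr ha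
  exact ⟨b, hab, hUW hb⟩

lemma uniformFilt_appClosed {U W : Set (I.carrier × A)} (hU : U ∈ uniformFilt P I)
    (hW : W ∈ uniformFilt P I) (hdef : fibSubDef P.app U W) :
    fibSubApp P.app U W ∈ uniformFilt P I := by
  obtain ⟨V₁, hV₁, h₁⟩ := hU
  obtain ⟨V₂, hV₂, h₂⟩ := hW
  obtain ⟨V, hV, hkey⟩ := exists_tracker3 P
    (Term.op (.op (.var 0) (.var 2)) (.op (.var 1) (.var 2))) hV₁ hV₂
  refine ⟨V, hV, fun i r a hr ha => ?_⟩
  obtain ⟨u, hu, v, hv, key⟩ := hkey r hr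
  obtain ⟨b₁, hb₁, hUb₁⟩ := h₁ i u a hu ha
  obtain ⟨b₂, hb₂, hWb₂⟩ := h₂ i v a hv ha
  obtain ⟨c, hc⟩ := Option.isSome_iff_exists.mp (hdef i b₁ b₂ hUb₁ hWb₂)
  refine ⟨c, key a c ?_, b₁, b₂, hUb₁, hWb₂, hc⟩
  simp [eval_s_term, hb₁, hb₂, hc]

variable (P I) in
lemma isFibFilter_uniformFilt : IsFibFilter P.app I.carrier (uniformFilt P I) :=
  ⟨fun _ hU => uniformFilt_inhab hU, fun _ hU _ => uniformFilt_upward hU,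
    fun _ hU _ hW => uniformFilt_appClosed hU hW⟩

variable (P I) in
lemma EI_mem_uniformFilt : {p : I.carrier × A | I.E p.1 p.2} ∈ uniformFilt P I := by
  obtain ⟨V, hV, hid⟩ := exists_ireal P
  exact ⟨V, hV, fun i r a hr ha => ⟨a, hid r hr a, ha⟩⟩

lemma base_mem_uniformFilt {V : Set A} (hV : V ∈ P.filt) :
    {p : I.carrier × A | p.2 ∈ V} ∈ uniformFilt P I := by
  obtain ⟨W, hW, hconst⟩ := exists_const_tracker P hV
  refine ⟨W, hW, fun i r a hr _ => ?_⟩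
  obtain ⟨b, hb, hrb⟩ := hconst r hr a
  exact ⟨b, hrb, hb⟩

lemma sliceFilt_subset_uniformFilt : sliceFilt P I ⊆ uniformFilt P I :=
  Set.sInter_subset_of_mem
    ⟨isFibFilter_uniformFilt P I, EI_mem_uniformFilt P I, fun _ hV => base_mem_uniformFilt hV⟩

lemma uniformFilt_subset_sliceFilt : uniformFilt P I ⊆ sliceFilt P I := by
  rintro U ⟨V, hV, h⟩
  have hdef : fibSubDef P.app {p : I.carrier × A | p.2 ∈ V} {p | I.E p.1 p.2} := by
    intro i r a hr ha
    obtain ⟨b, hb, -⟩ := h i r a hr ha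
    simp [hb]
  refine sliceFilt_upward
    (sliceFilt_appClosed (base_mem_sliceFilt hV) (EI_mem_sliceFilt P I) hdef) ?_
  rintro ⟨i, c⟩ ⟨r, a, hr, ha, hrc⟩
  obtain ⟨b, hb, hbU⟩ := h i r a hr ha
  obtain rfl : b = c := Option.some_inj.mp (hb ▸ hrc)
  exact hbU

end UniformFilt

/-- For an assembly `I` over `(A,φ)`, a subset `U ⊆ |I| × A` belongs to
the slice filter `φ_I` iff there is `V ∈ φ` such that for all `i`, all `r ∈ V` and all `a`
with `E_I(i,a)`, `ra` is defined and `(i, ra) ∈ U`. -/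
theorem statement13 (A : Type) (P : PCA A) (I : Asm P) (U : Set (I.carrier × A)) :
    U ∈ sliceFilt P I ↔
      ∃ V ∈ P.filt, ∀ i r a, r ∈ V → I.E i a →
        ∃ b, P.app r a = some b ∧ (i, b) ∈ U :=
  ⟨fun hU => sliceFilt_subset_uniformFilt hU, fun hU => uniformFilt_subset_sliceFilt hU⟩

end PcaPaper
end

section
/- Let (A,φ) be a PCA over Set and let I be an assembly over (A,φ). Define the category Asm_I whose objects are triples (X, k, E) with X a set, k: X → |I| a function, and E ⊆ X × A a relation such that every x ∈ X is related to some a ∈ A, and whose morphisms (X, k, E) → (X', k', E') are functions f: X → X' with k'∘f = k for which there exists U ∈ φ_I such that: for all x ∈ X, a ∈ A, r ∈ A with E(x,a) and (k(x), r) ∈ U, the product ra is defined and E'(f(x), ra). Then the slice category Asm(A,φ)/I is equivalent to Asm_I. -/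
open CategoryTheory

namespace PcaPaper

variable {A B C : Type}

/-! The two categories have the same objects up to repackaging: an assembly `X` over `I` is
a set over `|I|`, and conversely a slice assembly `(X, k, E)` becomes an assembly over `I` by
letting `x` be realized by pairs `⟨c, a⟩` with `c ∈ E_I (k x)` and `a ∈ E x`. Both round trips
are identities on carriers, tracked by pairing and projections. The one real point is on
morphisms: every `U ∈ φ_I` is *uniformly realized*, i.e. there is `V ∈ φ` such that `v · c`
lands in the fiber of `U` over `i` for all `v ∈ V` and `c ∈ E_I i`, because such `U` form a
fiberwise filter containing the generators of `φ_I`. So a fiberwise tracker `U` of `f` becomes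
the ordinary tracker `⟨c, a⟩ ↦ ⟨c, (v · c) · a⟩`. -/

lemma appVec_snoc (app : PApp A) (r : A) {n : ℕ} (u : Fin n → A) (b : A) :
    appVec app r (n + 1) (Fin.snoc u b) = (appVec app r n u).bind fun s => app s b := by
  simp only [appVec, Fin.snoc_castSucc, Fin.snoc_last]

lemma exists_mem_filt_appVec (P : PCA A) {T : Set A} (hT : T ∈ P.filt) :
    ∀ {n : ℕ} (U : Fin n → Set A), (∀ i, U i ∈ P.filt) →
      (∀ r ∈ T, ∀ u : Fin n → A, (appVec P.app r n u).isSome) →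
      ∃ W ∈ P.filt, ∀ w ∈ W, ∃ r ∈ T, ∃ u : Fin n → A, (∀ i, u i ∈ U i) ∧
        appVec P.app r n u = some w
  | 0, _, _, _ => ⟨T, hT, fun w hw => ⟨w, hw, Fin.elim0, fun i => i.elim0, rfl⟩⟩
  | n + 1, U, hU, hdef => by
    obtain ⟨a₀⟩ := P.nonemptyCarrier
    have hdef' : ∀ r ∈ T, ∀ u : Fin n → A, (appVec P.app r n u).isSome := fun r hr u =>
      isSome_bind_left (by simpa only [appVec_snoc] using hdef r hr (Fin.snoc u a₀))
    obtain ⟨W, hW, hWs⟩ :=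
      exists_mem_filt_appVec P hT (fun i => U i.castSucc) (fun _ => hU _) hdef'
    have hWU : SubDef P.app W (U (Fin.last n)) := fun w hw b _ => by
      obtain ⟨r, hr, u, -, hru⟩ := hWs w hw
      simpa only [appVec_snoc, hru, Option.bind_some] using hdef r hr (Fin.snoc u b)
    refine ⟨SubApp P.app W (U (Fin.last n)), P.isFilter.appClosed _ hW _ (hU _) hWU, ?_⟩
    rintro w' ⟨w, hw, b, hb, hwb⟩
    obtain ⟨r, hr, u, hu, hru⟩ := hWs w hw
    refine ⟨r, hr, Fin.snoc u b, fun i => ?_, by rw [appVec_snoc, hru, Option.bind_some, hwb]⟩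
    induction i using Fin.lastCases with
    | last => simpa only [Fin.snoc_last] using hb
    | cast i => simpa only [Fin.snoc_castSucc] using hu i

lemma exists_lambda_mem_filt (P : PCA A) {n : ℕ} (t : Term (n + 1)) (U : Fin n → Set A)
    (hU : ∀ i, U i ∈ P.filt) :
    ∃ W ∈ P.filt, ∀ w ∈ W, ∃ u : Fin n → A, (∀ i, u i ∈ U i) ∧
      ∀ x c, Term.eval P.app t (Fin.snoc u x) = some c → P.app w x = some c := by
  obtain ⟨T, hT, hreal⟩ := P.complete n t
  obtain ⟨a₀⟩ := P.nonemptyCarrier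
  have hdef : ∀ r ∈ T, ∀ u : Fin n → A, (appVec P.app r n u).isSome := fun r hr u => by
    simpa only [Fin.snoc_castSucc] using (hreal r hr (Fin.snoc u a₀)).1
  obtain ⟨W, hW, hWs⟩ := exists_mem_filt_appVec P hT U hU hdef
  refine ⟨W, hW, fun w hw => ?_⟩
  obtain ⟨r, hr, u, hu, hru⟩ := hWs w hw
  refine ⟨u, hu, fun x c hc => ?_⟩
  simpa only [appVec_snoc, hru, Option.bind_some] using (hreal r hr (Fin.snoc u x)).2 c hc

/-- The pairing combinator `λ c a z. z c a`. -/
def pairTerm : Term 3 := .op (.op (.var 2) (.var 0)) (.var 1)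

noncomputable def pairSet (P : PCA A) : Set A := (P.complete 2 pairTerm).choose

lemma pairSet_mem_filt (P : PCA A) : pairSet P ∈ P.filt :=
  (P.complete 2 pairTerm).choose_spec.1

lemma realizes_pairSet (P : PCA A) : Realizes P.app (pairSet P) pairTerm :=
  (P.complete 2 pairTerm).choose_spec.2

/-- The pair `⟨c, a⟩ = t · c · a`, for `t ∈ pairSet P`. -/
def pair (P : PCA A) (t c a : A) : Option A := (P.app t c).bind fun s => P.app s a

lemma pair_isSome (P : PCA A) {t : A} (ht : t ∈ pairSet P) (c a : A) :
    (pair P t c a).isSome :=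
  (realizes_pairSet P t ht ![c, a, a]).1

lemma app_pair (P : PCA A) {t c a b z d : A} (ht : t ∈ pairSet P)
    (hb : pair P t c a = some b) (hz : pair P z c a = some d) : P.app b z = some d := by
  have h := (realizes_pairSet P t ht ![c, a, z]).2 d
    (by simpa [pairTerm, Term.eval, pair] using hz)
  change (pair P t c a).bind (fun s => P.app s z) = some d at h
  simpa only [hb, Option.bind_some] using h

lemma exists_pair_elim (P : PCA A) (s : Term 2) :
    ∃ D ∈ P.filt, ∀ d ∈ D, ∀ t ∈ pairSet P, ∀ c a b, pair P t c a = some b →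
      ∀ e, Term.eval P.app s ![c, a] = some e → P.app d b = some e := by
  -- `d = λ b. b · k` with `k` realizing `λ c a. s(c, a)`.
  obtain ⟨K, hK, hKreal⟩ := P.complete 1 s
  obtain ⟨D, hD, hDs⟩ := exists_lambda_mem_filt P (n := 1) (.op (.var 1) (.var 0)) (fun _ => K)
    (fun _ => hK)
  refine ⟨D, hD, fun d hd t ht c a b hb e he => ?_⟩
  obtain ⟨k, hk, hdk⟩ := hDs d hd
  have hke : pair P (k 0) c a = some e := (hKreal (k 0) (hk 0) ![c, a]).2 e he
  exact hdk b e (by simp [Term.eval, Fin.snoc, app_pair P ht hb hke])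

lemma exists_fst (P : PCA A) :
    ∃ D ∈ P.filt, ∀ d ∈ D, ∀ t ∈ pairSet P, ∀ c a b, pair P t c a = some b →
      P.app d b = some c := by
  obtain ⟨D, hD, hDs⟩ := exists_pair_elim P (.var 0)
  exact ⟨D, hD, fun d hd t ht c a b hb => hDs d hd t ht c a b hb c (by simp [Term.eval])⟩

lemma exists_snd (P : PCA A) :
    ∃ D ∈ P.filt, ∀ d ∈ D, ∀ t ∈ pairSet P, ∀ c a b, pair P t c a = some b →
      P.app d b = some a := by
  obtain ⟨D, hD, hDs⟩ := exists_pair_elim P (.var 1)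
  exact ⟨D, hD, fun d hd t ht c a b hb => hDs d hd t ht c a b hb a (by simp [Term.eval])⟩

def UniformlyRealized (P : PCA A) (I : Asm P) (U : Set (I.carrier × A)) : Prop :=
  ∃ V ∈ P.filt, ∀ v ∈ V, ∀ i c, I.E i c → ∃ r, P.app v c = some r ∧ (i, r) ∈ U

section UniformlyRealized

variable {P : PCA A} {I : Asm P}

lemma sliceFilt_subset {Ψ : Set (Set (I.carrier × A))} (hΨ : IsFibFilter P.app I.carrier Ψ)
    (hE : {p : I.carrier × A | I.E p.1 p.2} ∈ Ψ)
    (hbase : ∀ V ∈ P.filt, {p : I.carrier × A | p.2 ∈ V} ∈ Ψ) : sliceFilt P I ⊆ Ψ :=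
  fun _ hU => Set.mem_sInter.mp hU Ψ ⟨hΨ, hE, hbase⟩

lemma isFibFilter_uniformlyRealized :
    IsFibFilter P.app I.carrier {U | UniformlyRealized P I U} where
  inhab := by
    rintro U ⟨V, hV, hVU⟩ i
    obtain ⟨v, hv⟩ := P.isFilter.nonempty V hV
    obtain ⟨c, hc⟩ := I.total i
    obtain ⟨r, -, hr⟩ := hVU v hv i c hc
    exact ⟨r, hr⟩
  upward := by
    rintro U ⟨V, hV, hVU⟩ U' hUU'
    exact ⟨V, hV, fun v hv i c hc => (hVU v hv i c hc).imp fun r hr => ⟨hr.1, hUU' hr.2⟩⟩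
  appClosed := by
    rintro U ⟨V, hV, hVU⟩ U' ⟨V', hV', hVU'⟩ hdef
    obtain ⟨S, hS, hSs⟩ := exists_tracker3 P
      (.op (.op (.var 0) (.var 2)) (.op (.var 1) (.var 2))) hV hV'
    refine ⟨S, hS, fun s hs i c hc => ?_⟩
    obtain ⟨v, hv, v', hv', hs⟩ := hSs s hs
    obtain ⟨r, hr, hrU⟩ := hVU v hv i c hc
    obtain ⟨r', hr', hrU'⟩ := hVU' v' hv' i c hc
    obtain ⟨q, hq⟩ := Option.isSome_iff_exists.mp (hdef i r r' hrU hrU')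
    exact ⟨q, hs c q (by simp [Term.eval, hr, hr', hq]), r, r', hrU, hrU', hq⟩

lemma uniformlyRealized_E : UniformlyRealized P I {p | I.E p.1 p.2} := by
  obtain ⟨V, hV, hid⟩ := exists_ireal P
  exact ⟨V, hV, fun v hv i c hc => ⟨c, hid v hv c, hc⟩⟩

lemma uniformlyRealized_base {V : Set A} (hV : V ∈ P.filt) :
    UniformlyRealized P I {p | p.2 ∈ V} := by
  obtain ⟨W, hW, hWs⟩ := exists_lambda_mem_filt P (n := 1) (.var 0) (fun _ => V) (fun _ => hV)
  refine ⟨W, hW, fun w hw i c _ => ?_⟩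
  obtain ⟨k, hk, hwk⟩ := hWs w hw
  exact ⟨k 0, hwk c (k 0) (by simp [Term.eval, Fin.snoc]), hk 0⟩

lemma uniformlyRealized_of_mem_sliceFilt {U : Set (I.carrier × A)} (hU : U ∈ sliceFilt P I) :
    UniformlyRealized P I U :=
  sliceFilt_subset isFibFilter_uniformlyRealized uniformlyRealized_E
    (fun _ => uniformlyRealized_base) hU

end UniformlyRealized

noncomputable section SliceEquivalence

variable {P : PCA A} {I : Asm P}

def sliceAsmOfOver (X : Over I) : SliceAsm P I :=
  ⟨X.left.carrier, X.hom.1, X.left.E, X.left.total⟩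

variable (P I) in
def overToSliceAsm : Over I ⥤ SliceAsm P I where
  obj := sliceAsmOfOver
  map f := ⟨f.left.1, fun x => congrFun (congrArg Subtype.val (Over.w f)) x, by
    obtain ⟨U, hU, hf⟩ := f.left.2
    exact ⟨{p | p.2 ∈ U}, base_mem_sliceFilt hU, hf⟩⟩
  map_id _ := Subtype.ext rfl
  map_comp _ _ := Subtype.ext rfl

namespace SliceAsm

def toAsm (X : SliceAsm P I) : Asm P where
  carrier := X.carrier
  E x b := ∃ t ∈ pairSet P, ∃ c a, I.E (X.k x) c ∧ X.E x a ∧ pair P t c a = some b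
  total x := by
    obtain ⟨a, ha⟩ := X.total x
    obtain ⟨c, hc⟩ := I.total (X.k x)
    obtain ⟨t, ht⟩ := P.isFilter.nonempty _ (pairSet_mem_filt P)
    obtain ⟨b, hb⟩ := Option.isSome_iff_exists.mp (pair_isSome P ht c a)
    exact ⟨b, t, ht, c, a, hc, ha, hb⟩

lemma exists_tracks_k (X : SliceAsm P I) : ∃ D ∈ P.filt, Tracks P (X := X.toAsm) D X.k := by
  obtain ⟨D, hD, hfst⟩ := exists_fst P
  refine ⟨D, hD, ?_⟩
  rintro x b d ⟨t, ht, c, a, hc, -, hb⟩ hd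
  exact ⟨c, hfst d hd t ht c a b hb, hc⟩

lemma exists_snd_tracker (X : SliceAsm P I) :
    ∃ D ∈ P.filt, ∀ d ∈ D, ∀ x b, X.toAsm.E x b →
      ∃ a, P.app d b = some a ∧ X.E x a := by
  obtain ⟨D, hD, hsnd⟩ := exists_snd P
  refine ⟨D, hD, ?_⟩
  rintro d hd x b ⟨t, ht, c, a, -, ha, hb⟩
  exact ⟨a, hsnd d hd t ht c a b hb, ha⟩

def toOver (X : SliceAsm P I) : Over I :=
  Over.mk (⟨X.k, X.exists_tracks_k⟩ : X.toAsm ⟶ I)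

lemma exists_tracks_toAsm_map {X Y : SliceAsm P I} (f : X ⟶ Y) :
    ∃ W ∈ P.filt, Tracks P (X := X.toAsm) (Y := Y.toAsm) W f.1 := by
  obtain ⟨U, hU, hf⟩ := f.2.2
  obtain ⟨V, hV, hVU⟩ := uniformlyRealized_of_mem_sliceFilt hU
  obtain ⟨D₀, hD₀, hfst⟩ := exists_fst P
  obtain ⟨D₁, hD₁, hsnd⟩ := exists_snd P
  -- `w` maps `b = ⟨c, a⟩` to `⟨c, (v · c) · a⟩`, with parameters `t, d₀, d₁, v`.
  obtain ⟨W, hW, hWs⟩ := exists_lambda_mem_filt P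
    (.op (.op (.var 0) (.op (.var 1) (.var 4)))
      (.op (.op (.var 3) (.op (.var 1) (.var 4))) (.op (.var 2) (.var 4))))
    ![pairSet P, D₀, D₁, V] (by intro i; fin_cases i <;> simp [pairSet_mem_filt, *])
  refine ⟨W, hW, ?_⟩
  rintro x b w ⟨t, ht, c, a, hc, ha, hb⟩ hw
  obtain ⟨u, hu, hwu⟩ := hWs w hw
  obtain ⟨r, hr, hrU⟩ := hVU (u 3) (hu 3) (X.k x) c hc
  obtain ⟨a', ha', hYa'⟩ := hf x a r ha hrU
  obtain ⟨b', hb'⟩ := Option.isSome_iff_exists.mp (pair_isSome P (hu 0) c a')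
  refine ⟨b', hwu b b' ?_, u 0, hu 0, c, a', by rwa [f.2.1 x], hYa', hb'⟩
  simpa [Term.eval, Fin.snoc, Fin.castPred, Fin.castLT, hfst (u 1) (hu 1) t ht c a b hb,
    hsnd (u 2) (hu 2) t ht c a b hb, hr, ha', pair] using hb'

end SliceAsm

variable (P I) in
def sliceAsmToOver : SliceAsm P I ⥤ Over I where
  obj := SliceAsm.toOver
  map f := Over.homMk ⟨f.1, SliceAsm.exists_tracks_toAsm_map f⟩ (Subtype.ext (funext f.2.1))
  map_id _ := Over.OverMorphism.ext (Subtype.ext rfl)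
  map_comp _ _ := Over.OverMorphism.ext (Subtype.ext rfl)

lemma exists_tracks_pair_self (X : Over I) :
    ∃ W ∈ P.filt, Tracks P (X := X.left) (Y := (sliceAsmOfOver X).toAsm) W id := by
  obtain ⟨U, hU, hk⟩ := X.hom.2
  -- `a ↦ ⟨h · a, a⟩`, with `h` tracking the structure map.
  obtain ⟨W, hW, hWs⟩ := exists_tracker3 P
    (.op (.op (.var 0) (.op (.var 1) (.var 2))) (.var 2)) (pairSet_mem_filt P) hU
  refine ⟨W, hW, fun x a w hx hw => ?_⟩
  obtain ⟨t, ht, h, hh, hwth⟩ := hWs w hw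
  obtain ⟨c, hc, hIc⟩ := hk x a h hx hh
  obtain ⟨b, hb⟩ := Option.isSome_iff_exists.mp (pair_isSome P ht c a)
  exact ⟨b, hwth a b (by simpa [Term.eval, hc, pair] using hb), t, ht, c, a, hIc, hx, hb⟩

def unitIso (X : Over I) : X ≅ (sliceAsmToOver P I).obj ((overToSliceAsm P I).obj X) where
  hom := Over.homMk ⟨id, exists_tracks_pair_self X⟩ (Subtype.ext rfl)
  inv := Over.homMk ⟨id, by
      obtain ⟨D, hD, hsnd⟩ := (sliceAsmOfOver X).exists_snd_tracker
      exact ⟨D, hD, fun x b d hb hd => hsnd d hd x b hb⟩⟩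
    (Subtype.ext rfl)
  hom_inv_id := Over.OverMorphism.ext (Subtype.ext rfl)
  inv_hom_id := Over.OverMorphism.ext (Subtype.ext rfl)

def counitIso (Y : SliceAsm P I) :
    (overToSliceAsm P I).obj ((sliceAsmToOver P I).obj Y) ≅ Y where
  hom := ⟨id, fun _ => rfl, by
    obtain ⟨D, hD, hsnd⟩ := Y.exists_snd_tracker
    exact ⟨{p | p.2 ∈ D}, base_mem_sliceFilt hD, fun x b d hb hd => hsnd d hd x b hb⟩⟩
  -- `a ↦ t · c · a` with `c ∈ E_I (k x)`: the realizer of `k x` is supplied by the fiber.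
  inv := ⟨id, fun _ => rfl, by
    have hdef : fibSubDef P.app {p : I.carrier × A | p.2 ∈ pairSet P} {p | I.E p.1 p.2} :=
      fun _ t c ht _ => isSome_bind_left (pair_isSome P ht c c)
    refine ⟨_, sliceFilt_appClosed (base_mem_sliceFilt (pairSet_mem_filt P))
      (EI_mem_sliceFilt P I) hdef, ?_⟩
    rintro x a s ha ⟨t, c, ht, hc, hs⟩
    obtain ⟨b, hb⟩ := Option.isSome_iff_exists.mp (pair_isSome P ht c a)
    have hsa : P.app s a = some b := by simpa only [pair, hs, Option.bind_some] using hb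
    exact ⟨b, hsa, t, ht, c, a, hc, ha, hb⟩⟩
  hom_inv_id := Subtype.ext rfl
  inv_hom_id := Subtype.ext rfl

end SliceEquivalence

/-- The slice category `Asm(A,φ)/I` is equivalent to the category of
assemblies over the slice PCA `(A,φ)/I` (objects: sets over `|I|` with a total existence
relation; morphisms: fiberwise functions tracked by an element of the filter `φ_I`). -/
theorem statement14 (A : Type) (P : PCA A) (I : Asm P) :
    Nonempty (Over I ≌ SliceAsm P I) :=
  ⟨CategoryTheory.Equivalence.mk (overToSliceAsm P I) (sliceAsmToOver P I)
    (NatIso.ofComponents unitIso fun _ => Over.OverMorphism.ext (Subtype.ext rfl))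
    (NatIso.ofComponents counitIso fun _ => Subtype.ext rfl)⟩

end PcaPaper
end

section
/- Let (A,φ_C) be a PCA over Set whose filter is generated by singletons from a set C ⊆ A closed under application (φ_C = {U ⊆ A | ∃a ∈ C, a ∈ U}), and let I be a partitioned assembly over (A,φ_C), i.e., E_I is the graph of a function h: |I| → A. Then a subset U ⊆ |I| × A belongs to the filter (φ_C)_I if and only if there exists r ∈ C such that for every i ∈ |I|, the product r·h(i) is defined and (i, r·h(i)) ∈ U. In particular, (φ_C)_I is generated by the set of functions {g: |I| → A | ∃r ∈ C, ∀i, r·h(i) is defined and equals g(i)}. -/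
open CategoryTheory

namespace PcaPaper

variable {A B C : Type}

/-! Write `Ψ_C` (`uniformFilter`) for the sets containing the graph of some `i ↦ r · h i`
with `r ∈ C`. It is a fiberwise filter (closure under application uses an `S`-combinator
from `C`), it contains `E_I` (identity combinator) and every `|I| × V` with `V ∈ φ`
(`K`-combinator), so `φ_I ⊆ Ψ_C`. Conversely, a member of `Ψ_C` witnessed by `r` contains
the fiberwise application of `|I| × {r}` to `E_I`, which lies in `φ_I`. -/

def uniformFilter (app : PApp A) (C : Set A) {ι : Type} (h : ι → A) : Set (Set (ι × A)) :=
  {U | ∃ r ∈ C, ∀ i, ∃ b, app r (h i) = some b ∧ (i, b) ∈ U}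

lemma uniformFilter_eq_setOf_graph (app : PApp A) (C : Set A) {ι : Type} (h : ι → A) :
    uniformFilter app C h = {U | ∃ g : ι → A,
      (∃ r ∈ C, ∀ i, app r (h i) = some (g i)) ∧ ∀ i, (i, g i) ∈ U} := by
  ext U
  constructor
  · rintro ⟨r, hrC, hr⟩
    choose g hg hgU using hr
    exact ⟨g, ⟨r, hrC, hg⟩, hgU⟩
  · rintro ⟨g, ⟨r, hrC, hg⟩, hgU⟩
    exact ⟨r, hrC, fun i => ⟨g i, hg i, hgU i⟩⟩

lemma mem_sliceFilt_of_forall_app {P : PCA A} {I : Asm P} {V : Set A} (hV : V ∈ P.filt)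
    {U : Set (I.carrier × A)}
    (hU : ∀ r ∈ V, ∀ i a, I.E i a → ∃ b, P.app r a = some b ∧ (i, b) ∈ U) :
    U ∈ sliceFilt P I := by
  refine sliceFilt_upward (sliceFilt_appClosed (base_mem_sliceFilt hV)
    (EI_mem_sliceFilt P I) ?_) ?_
  · rintro i r a hr ha
    obtain ⟨b, hb, -⟩ := hU r hr i a ha
    simp [hb]
  · rintro ⟨i, c⟩ ⟨r, a, hr, ha, hc⟩
    obtain ⟨b, hb, hbU⟩ := hU r hr i a ha
    rw [hb, Option.some_inj] at hc
    obtain rfl : b = c := hc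
    exact hbU

lemma uniformFilter_subset_sliceFilt {P : PCA A} {C : Set A}
    (hC : ∀ r ∈ C, ({r} : Set A) ∈ P.filt) {I : Asm P} {h : I.carrier → A}
    (hI : ∀ i a, I.E i a → a = h i) : uniformFilter P.app C h ⊆ sliceFilt P I := by
  rintro U ⟨r, hrC, hr⟩
  refine mem_sliceFilt_of_forall_app (hC r hrC) ?_
  rintro r' rfl i a ha
  exact hI i a ha ▸ hr i

section SingletonGenerated

variable {P : PCA A} {C : Set A} (hφ : P.filt = {U : Set A | ∃ a ∈ C, a ∈ U})
include hφ

lemma singleton_mem_filt {r : A} (hr : r ∈ C) : ({r} : Set A) ∈ P.filt := by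
  rw [hφ]
  exact ⟨r, hr, rfl⟩

/-- Since `{u}` and `{v}` belong to `φ`, so does the set of trackers of `λ x. t(u, v, x)`,
hence it meets `C`. -/
lemma exists_mem_realizer (t : Term (2 + 1)) {u v : A} (hu : u ∈ C) (hv : v ∈ C) :
    ∃ w ∈ C, ∀ x c, Term.eval P.app t ![u, v, x] = some c → P.app w x = some c := by
  obtain ⟨W, hW, hWreal⟩ := exists_tracker3 P t (singleton_mem_filt hφ hu)
    (singleton_mem_filt hφ hv)
  obtain ⟨w, hwC, hwW⟩ : ∃ w ∈ C, w ∈ W := by rwa [hφ] at hW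
  obtain ⟨u', rfl, v', rfl, hw⟩ := hWreal w hwW
  exact ⟨w, hwC, hw⟩

lemma isFibFilter_uniformFilter {ι : Type} (h : ι → A) :
    IsFibFilter P.app ι (uniformFilter P.app C h) where
  inhab := by
    rintro U ⟨r, -, hr⟩ i
    obtain ⟨b, -, hb⟩ := hr i
    exact ⟨b, hb⟩
  upward := by
    rintro U ⟨r, hrC, hr⟩ V hUV
    refine ⟨r, hrC, fun i => ?_⟩
    obtain ⟨b, hb, hbU⟩ := hr i
    exact ⟨b, hb, hUV hbU⟩
  appClosed := by
    rintro U ⟨r, hrC, hr⟩ V ⟨s, hsC, hs⟩ hdef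
    obtain ⟨w, hwC, hw⟩ := exists_mem_realizer hφ
      (.op (.op (.var 0) (.var 2)) (.op (.var 1) (.var 2))) hrC hsC
    refine ⟨w, hwC, fun i => ?_⟩
    obtain ⟨b, hb, hbU⟩ := hr i
    obtain ⟨d, hd, hdV⟩ := hs i
    obtain ⟨c, hc⟩ := Option.isSome_iff_exists.mp (hdef i b d hbU hdV)
    refine ⟨c, hw (h i) c ?_, b, d, hbU, hdV, hc⟩
    simp [Term.eval, hb, hd, hc]

lemma sliceFilt_subset_uniformFilter {I : Asm P} {h : I.carrier → A}
    (hI : ∀ i a, I.E i a ↔ a = h i) : sliceFilt P I ⊆ uniformFilter P.app C h := by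
  refine Set.sInter_subset_of_mem ⟨isFibFilter_uniformFilter hφ h, ?_, fun V hV => ?_⟩
  · obtain ⟨U, hU, hid⟩ := exists_ireal P
    obtain ⟨r, hrC, hrU⟩ : ∃ r ∈ C, r ∈ U := by rwa [hφ] at hU
    exact ⟨r, hrC, fun i => ⟨h i, hid r hrU (h i), (hI i (h i)).mpr rfl⟩⟩
  · obtain ⟨a, haC, haV⟩ : ∃ a ∈ C, a ∈ V := by rwa [hφ] at hV
    obtain ⟨k, hkC, hk⟩ := exists_mem_realizer hφ (.var 0) haC haC
    exact ⟨k, hkC, fun i => ⟨a, hk (h i) a (by simp [Term.eval]), haV⟩⟩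

lemma sliceFilt_eq_uniformFilter {I : Asm P} {h : I.carrier → A}
    (hI : ∀ i a, I.E i a ↔ a = h i) : sliceFilt P I = uniformFilter P.app C h :=
  (sliceFilt_subset_uniformFilter hφ hI).antisymm (uniformFilter_subset_sliceFilt
    (fun _ => singleton_mem_filt hφ) fun i a => (hI i a).mp)

end SingletonGenerated

theorem statement15_general (A : Type) (P : PCA A) (C : Set A)
    (hφ : P.filt = {U : Set A | ∃ a ∈ C, a ∈ U})
    (I : Asm P) (h : I.carrier → A) (hI : ∀ i a, I.E i a ↔ a = h i) :
    (∀ U : Set (I.carrier × A),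
      U ∈ sliceFilt P I ↔
        ∃ r ∈ C, ∀ i, ∃ b, P.app r (h i) = some b ∧ (i, b) ∈ U) ∧
    sliceFilt P I = {U : Set (I.carrier × A) | ∃ g : I.carrier → A,
        (∃ r ∈ C, ∀ i, P.app r (h i) = some (g i)) ∧ ∀ i, (i, g i) ∈ U} := by
  have hslice := sliceFilt_eq_uniformFilter hφ hI
  exact ⟨Set.ext_iff.mp hslice, hslice.trans (uniformFilter_eq_setOf_graph P.app C h)⟩

/-- If the filter of `(A,φ_C)` is generated by singletons from a set `C`
closed under application, and `I` is a partitioned assembly with `E_I` the graph of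
`h : |I| → A`, then `U ∈ (φ_C)_I` iff there is `r ∈ C` with `r·h(i)` defined and
`(i, r·h(i)) ∈ U` for all `i`; in particular `(φ_C)_I` is generated by the functions
`g : |I| → A` computed uniformly from `h` by some `r ∈ C`. -/
theorem statement15 (A : Type) (P : PCA A) (C : Set A)
    (hC : ∀ a ∈ C, ∀ b ∈ C, ∀ c, P.app a b = some c → c ∈ C)
    (hφ : P.filt = {U : Set A | ∃ a ∈ C, a ∈ U})
    (I : Asm P) (h : I.carrier → A) (hI : ∀ i a, I.E i a ↔ a = h i) :
    (∀ U : Set (I.carrier × A),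
      U ∈ sliceFilt P I ↔
        ∃ r ∈ C, ∀ i, ∃ b, P.app r (h i) = some b ∧ (i, b) ∈ U) ∧
    sliceFilt P I = {U : Set (I.carrier × A) | ∃ g : I.carrier → A,
        (∃ r ∈ C, ∀ i, P.app r (h i) = some (g i)) ∧ ∀ i, (i, g i) ∈ U} :=
  statement15_general A P C hφ I h hI

end PcaPaper
end

section
/- Let (A,φ), (B,ψ), (C,χ) be PCAs over Set. Then: (i) the identity applicative morphism δ_A: (A,φ) → (A,φ) is quasi-surjective; (ii) the composition of two quasi-surjective applicative morphisms is quasi-surjective; (iii) if f: (A,φ) → (B,ψ) and g: (B,ψ) → (C,χ) are applicative morphisms such that g∘f is quasi-surjective, then g is quasi-surjective. -/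
open CategoryTheory

namespace PcaPaper

variable {A B C : Type}

lemma exists_comp_realizer (P : PCA A) {U V : Set A} (hU : U ∈ P.filt) (hV : V ∈ P.filt) :
    ∃ W ∈ P.filt, ∀ w ∈ W, ∃ u ∈ U, ∃ v ∈ V,
      ∀ x y c, P.app u x = some y → P.app v y = some c → P.app w x = some c := by
  obtain ⟨W, hW, hreal⟩ := exists_tracker3 P (Term.op (.var 1) (.op (.var 0) (.var 2))) hU hV
  refine ⟨W, hW, fun w hw => ?_⟩
  obtain ⟨u, hu, v, hv, key⟩ := hreal w hw
  refine ⟨u, hu, v, hv, fun x y c hux hvy => key x c ?_⟩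
  rw [eval_comp_term, hux, Option.bind_some, hvy]

lemma exists_app_realizer (P : PCA A) {U V : Set A} (hU : U ∈ P.filt) (hV : V ∈ P.filt) :
    ∃ W ∈ P.filt, ∀ w ∈ W, ∃ u ∈ U, ∃ v ∈ V,
      ∀ x d c, P.app u v = some d → P.app d x = some c → P.app w x = some c := by
  obtain ⟨W, hW, hreal⟩ := exists_tracker3 P (Term.op (.op (.var 0) (.var 1)) (.var 2)) hU hV
  refine ⟨W, hW, fun w hw => ?_⟩
  obtain ⟨u, hu, v, hv, key⟩ := hreal w hw
  refine ⟨u, hu, v, hv, fun x d c huv hdx => key x c ?_⟩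
  rw [eval_app2_term, huv, Option.bind_some, hdx]

/-- Each `k ∈ K` is `t · v` with `t` tracking `g` and `g n v`, so `k` simulates `n` along `g`. -/
lemma IsAppMor.exists_simulation {appB : PApp B} {ψ : Set (Set B)} {R : PCA C}
    {g : B → C → Prop} (hg : IsAppMor appB ψ R.app R.filt g) {N : Set B} (hN : N ∈ ψ) :
    ∃ K ∈ R.filt, ∀ k ∈ K, ∃ n ∈ N, ∀ b b' c, appB n b = some b' → g b c →
      ∃ e, R.app k c = some e ∧ g b' e := by
  obtain ⟨T, hT, htracks⟩ := hg.tracked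
  obtain ⟨K, hK, hreal⟩ := exists_app_realizer R hT (hg.image N hN)
  refine ⟨K, hK, fun k hk => ?_⟩
  obtain ⟨t, ht, v, ⟨n, hn, hnv⟩, key⟩ := hreal k hk
  refine ⟨n, hn, fun b b' c hnb hbc => ?_⟩
  obtain ⟨d, e, htv, hdc, hb'e⟩ := htracks n b b' hnb v c hnv hbc t ht
  exact ⟨e, key c d e htv hdc, hb'e⟩

lemma relImage_relComp (g : B → C → Prop) (f : A → B → Prop) (V : Set A) :
    relImage (RelComp g f) V = relImage g (relImage f V) := by
  ext c
  constructor
  · rintro ⟨a, ha, b, hab, hbc⟩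
    exact ⟨b, ⟨a, ha, hab⟩, hbc⟩
  · rintro ⟨b, ⟨a, ha, hab⟩, hbc⟩
    exact ⟨a, ha, b, hab, hbc⟩

lemma quasiSurjective_relId (P : PCA A) : QuasiSurjective P P (relId A) := by
  obtain ⟨N, hN, hI⟩ := exists_ireal P
  refine ⟨N, hN, fun U hU => ⟨U, hU, ?_⟩⟩
  rintro n hn b ⟨b, hb, rfl⟩
  exact ⟨b, hI n hn b, hb⟩

/-- The witness for `g ∘ f` is `λx. n_g (k x)`, where `k` simulates an element of `N_f` along
`g`. -/
lemma QuasiSurjective.relComp {P : PCA A} {Q : PCA B} {R : PCA C} {f : A → B → Prop}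
    {g : B → C → Prop} (hg : IsAppMor Q.app Q.filt R.app R.filt g)
    (hqf : QuasiSurjective P Q f) (hqg : QuasiSurjective Q R g) :
    QuasiSurjective P R (RelComp g f) := by
  obtain ⟨Nf, hNf, hNfV⟩ := hqf
  obtain ⟨Ng, hNg, hNgU⟩ := hqg
  obtain ⟨K, hK, hsim⟩ := hg.exists_simulation hNf
  obtain ⟨S, hS, hcomp⟩ := exists_comp_realizer R hK hNg
  refine ⟨S, hS, fun U hU => ?_⟩
  obtain ⟨V, hV, hVU⟩ := hNgU U hU
  obtain ⟨W, hW, hWV⟩ := hNfV V hV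
  refine ⟨W, hW, ?_⟩
  rintro s hs c ⟨a, ha, b, hab, hbc⟩
  obtain ⟨k, hk, n, hn, hnc⟩ := hcomp s hs
  obtain ⟨m, hm, hkm⟩ := hsim k hk
  obtain ⟨b', hmb, hb'⟩ := hWV m hm b ⟨a, ha, hab⟩
  obtain ⟨e, hkc, hb'e⟩ := hkm b b' c hmb hbc
  obtain ⟨r, hne, hr⟩ := hVU n hn e ⟨b', hb', hb'e⟩
  exact ⟨r, hnc c e r hkc hne, hr⟩

lemma QuasiSurjective.of_relComp {P : PCA A} {Q : PCA B} {R : PCA C} {f : A → B → Prop}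
    {g : B → C → Prop} (hf : IsAppMor P.app P.filt Q.app Q.filt f)
    (h : QuasiSurjective P R (RelComp g f)) : QuasiSurjective Q R g := by
  obtain ⟨N, hN, hNU⟩ := h
  refine ⟨N, hN, fun U hU => ?_⟩
  obtain ⟨V, hV, hVU⟩ := hNU U hU
  refine ⟨relImage f V, hf.image V hV, ?_⟩
  rw [← relImage_relComp]
  exact hVU

/-- (i) The identity applicative morphism is quasi-surjective; (ii) the
composition of quasi-surjective applicative morphisms is quasi-surjective; (iii) if the
composite `g ∘ f` of applicative morphisms is quasi-surjective then so is `g`. -/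
theorem statement16 (A B C : Type) (P : PCA A) (Q : PCA B) (R : PCA C) :
    QuasiSurjective P P (relId A) ∧
    (∀ (f : A → B → Prop) (g : B → C → Prop),
      IsAppMor P.app P.filt Q.app Q.filt f →
      IsAppMor Q.app Q.filt R.app R.filt g →
      QuasiSurjective P Q f → QuasiSurjective Q R g →
      QuasiSurjective P R (RelComp g f)) ∧
    (∀ (f : A → B → Prop) (g : B → C → Prop),
      IsAppMor P.app P.filt Q.app Q.filt f →
      IsAppMor Q.app Q.filt R.app R.filt g →
      QuasiSurjective P R (RelComp g f) → QuasiSurjective Q R g) :=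
  ⟨quasiSurjective_relId P,
    fun _ _ _ hg hqf hqg => hqf.relComp hg hqg,
    fun _ _ hf _ h => h.of_relComp hf⟩

end PcaPaper
end

section
/- Let (A,φ) and (B,ψ) be PCAs over Set and let f: (A,φ) → (B,ψ) be an applicative morphism. Then the induced functor Asm(f): Asm(A,φ) → Asm(B,ψ) has a right adjoint if and only if f is computationally dense. -/
open CategoryTheory

namespace PcaPaper

variable {A B C : Type}

/-! If `M` witnesses density, the right adjoint `G` sends `Y` to the assembly of those
`y ∈ |Y|` that have a realizer `a` with `M·f(a) ⊆ E_Y(y)`, realized by all such `a`. Then `M`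
tracks the counit `Asm(f)(G Y) → Y`, and density is exactly what turns a tracker of a map
`Asm(f)(X) → Y` into a tracker of its transpose `X → G Y`.

Conversely, apply the adjunction to the assembly of nonempty subsets of `B` and to the map
sending `a`, seen in the assembly `(A, =)`, to the set of codes `c` with `c·z ∈ U·f(a)` for all
`z`. A tracker `V` of the transpose is the `V` of density; a tracker `N` of the counit sends
`f(r·a)` to such codes, so `M = λb. (N·b)·b` lands in `U·f(a)`. -/

section RightAdjoint

variable {A B : Type} (P : PCA A) (Q : PCA B) (f : A → B → Prop)

def CompDenseWith (M : Set B) : Prop :=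
  ∀ U ∈ Q.filt, ∃ V ∈ P.filt, (∀ r ∈ V, ∀ a, (P.app r a).isSome) ∧
    ∀ r ∈ V, ∀ a a', P.app r a = some a' → SubDef Q.app U {b | f a b} →
      ∀ m ∈ M, ∀ b', f a' b' →
        ∃ c, Q.app m b' = some c ∧ c ∈ SubApp Q.app U {b | f a b}

def rightAdjRel (M : Set B) (Y : Asm Q) (y : Y.carrier) (a : A) : Prop :=
  ∀ m ∈ M, ∀ b, f a b → ∃ c, Q.app m b = some c ∧ Y.E y c

def rightAdjObj (M : Set B) (Y : Asm Q) : Asm P where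
  carrier := {y : Y.carrier // ∃ a, rightAdjRel Q f M Y y a}
  E y a := rightAdjRel Q f M Y y.1 a
  total y := y.2

variable {P Q f}

lemma compDense_iff : CompDense P Q f ↔ ∃ M ∈ Q.filt, CompDenseWith P Q f M := Iff.rfl

variable {M : Set B}

def rightAdjCounit (hf : IsAppMor P.app P.filt Q.app Q.filt f) (hM : M ∈ Q.filt) (Y : Asm Q) :
    (asmFunctor hf).obj (rightAdjObj P Q f M Y) ⟶ Y :=
  ⟨fun y => y.1, M, hM, fun _ b m ⟨_, hya, hab⟩ hm => hya m hm b hab⟩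

lemma exists_tracker_transpose (hf : IsAppMor P.app P.filt Q.app Q.filt f)
    (hd : CompDenseWith P Q f M) {X : Asm P} {Y : Asm Q} (g : (asmFunctor hf).obj X ⟶ Y) :
    ∃ V ∈ P.filt, ∀ x a, X.E x a → ∀ r ∈ V,
      ∃ a', P.app r a = some a' ∧ rightAdjRel Q f M Y (g.1 x) a' := by
  obtain ⟨U, hU, hg⟩ := g.2
  obtain ⟨V, hV, hVdef, hVreal⟩ := hd U hU
  refine ⟨V, hV, fun x a hxa r hr => ?_⟩
  obtain ⟨a', ha'⟩ := Option.isSome_iff_exists.mp (hVdef r hr a)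
  have hUdef : SubDef Q.app U {b | f a b} := fun u hu b hab => by
    obtain ⟨c, hc, -⟩ := hg x b u ⟨a, hxa, hab⟩ hu
    simp [hc]
  refine ⟨a', ha', fun m hm b' hb' => ?_⟩
  obtain ⟨c, hc, u, hu, b, hab, hubc⟩ := hVreal r hr a a' ha' hUdef m hm b' hb'
  obtain ⟨c', hc', hYc'⟩ := hg x b u ⟨a, hxa, hab⟩ hu
  rw [hubc, Option.some.injEq] at hc'
  exact ⟨c, hc, hc' ▸ hYc'⟩

def rightAdjTranspose (hf : IsAppMor P.app P.filt Q.app Q.filt f) (hd : CompDenseWith P Q f M)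
    {X : Asm P} {Y : Asm Q} (g : (asmFunctor hf).obj X ⟶ Y) : X ⟶ rightAdjObj P Q f M Y :=
  ⟨fun x => ⟨g.1 x, by
      obtain ⟨V, hV, hVtr⟩ := exists_tracker_transpose hf hd g
      obtain ⟨a, hxa⟩ := X.total x
      obtain ⟨r, hr⟩ := P.isFilter.nonempty V hV
      obtain ⟨a', -, hya'⟩ := hVtr x a hxa r hr
      exact ⟨a', hya'⟩⟩, by
    obtain ⟨V, hV, hVtr⟩ := exists_tracker_transpose hf hd g
    exact ⟨V, hV, fun x a r hxa hr => hVtr x a hxa r hr⟩⟩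

def rightAdj (hf : IsAppMor P.app P.filt Q.app Q.filt f) (hM : M ∈ Q.filt)
    (hd : CompDenseWith P Q f M) : Asm Q ⥤ Asm P where
  obj Y := rightAdjObj P Q f M Y
  map {Y _} k := rightAdjTranspose hf hd (rightAdjCounit hf hM Y ≫ k)
  map_id _ := Subtype.ext (funext fun _ => Subtype.ext rfl)
  map_comp _ _ := Subtype.ext (funext fun _ => Subtype.ext rfl)

def rightAdjAdjunction (hf : IsAppMor P.app P.filt Q.app Q.filt f) (hM : M ∈ Q.filt)
    (hd : CompDenseWith P Q f M) :
    asmFunctor hf ⊣ rightAdj hf hM hd :=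
  Adjunction.mkOfHomEquiv
    { homEquiv := fun _ Y =>
        { toFun := rightAdjTranspose hf hd
          invFun := fun h => (asmFunctor hf).map h ≫ rightAdjCounit hf hM Y
          left_inv := fun _ => Subtype.ext rfl
          right_inv := fun _ => Subtype.ext (funext fun _ => Subtype.ext rfl) }
      homEquiv_naturality_left_symm := fun _ _ => Subtype.ext rfl
      homEquiv_naturality_right := fun _ _ => Subtype.ext (funext fun _ => Subtype.ext rfl) }

end RightAdjoint

section CompDenseOfAdjunction

variable {A B : Type}

def subsetsAsm (Q : PCA B) : Asm Q where
  carrier := {β : Set B // β.Nonempty}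
  E β c := c ∈ β.1
  total β := β.2

def realizersAsm (P : PCA A) : Asm P where
  carrier := A
  E x a := a = x
  total x := ⟨x, rfl⟩

/-- Delaying `u·b` behind a dummy argument `z` lets a tracker of `a ↦ thunkSet Q f U a` be total
even where `U·f(a)` is undefined; there the set is all of `B`. -/
def thunkSet (Q : PCA B) (f : A → B → Prop) (U : Set B) (a : A) : Set B :=
  {c | SubDef Q.app U {b | f a b} →
    ∀ z, ∃ d, Q.app c z = some d ∧ d ∈ SubApp Q.app U {b | f a b}}

lemma exists_thunk_realizer (Q : PCA B) {U : Set B} (hU : U ∈ Q.filt) :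
    ∃ W ∈ Q.filt, ∀ w ∈ W, ∃ u ∈ U, ∀ b, ∃ c, Q.app w b = some c ∧
      ∀ d, Q.app u b = some d → ∀ z, Q.app c z = some d := by
  obtain ⟨R, hR, hRreal⟩ := Q.complete 2 (.op (.var 0) (.var 1))
  have hRU : SubDef Q.app R U := fun r hr u _ => by
    obtain ⟨s, -, hs, -⟩ := realizes3_chain Q hRreal hr u u
    simp [hs]
  refine ⟨SubApp Q.app R U, Q.isFilter.appClosed R hR U hU hRU, ?_⟩
  rintro w ⟨r, hr, u, hu, hruw⟩
  refine ⟨u, hu, fun b => ?_⟩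
  obtain ⟨s, c, hrus, hsbc⟩ := realizes3_chain Q hRreal hr u b
  rw [hruw, Option.some.injEq] at hrus
  subst hrus
  refine ⟨c, hsbc, fun d hubd z => ?_⟩
  have h := (hRreal r hr ![u, b, z]).2 d (by simpa [Term.eval] using hubd)
  simpa [appVec_three_cons, hruw, hsbc] using h

variable {P : PCA A} {Q : PCA B} {f : A → B → Prop} {U : Set B}

lemma mem_thunkSet {a : A} {u b c : B} (hu : u ∈ U) (hab : f a b)
    (hc : ∀ d, Q.app u b = some d → ∀ z, Q.app c z = some d) : c ∈ thunkSet Q f U a := by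
  intro hdef z
  obtain ⟨d, hd⟩ := Option.isSome_iff_exists.mp (hdef u hu b hab)
  exact ⟨d, hc d hd z, u, hu, b, hab, hd⟩

def thunkHom (hf : IsAppMor P.app P.filt Q.app Q.filt f) (hU : U ∈ Q.filt) :
    (asmFunctor hf).obj (realizersAsm P) ⟶ subsetsAsm Q :=
  ⟨fun a => ⟨thunkSet Q f U a, by
      obtain ⟨W, hW, hWreal⟩ := exists_thunk_realizer Q hU
      obtain ⟨w, hw⟩ := Q.isFilter.nonempty W hW
      obtain ⟨u, hu, hwu⟩ := hWreal w hw
      obtain ⟨b, hab⟩ := hf.total a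
      obtain ⟨c, -, hc⟩ := hwu b
      exact ⟨c, mem_thunkSet hu hab hc⟩⟩, by
    obtain ⟨W, hW, hWreal⟩ := exists_thunk_realizer Q hU
    refine ⟨W, hW, ?_⟩
    rintro x b w ⟨a, rfl, hab⟩ hw
    obtain ⟨u, hu, hwu⟩ := hWreal w hw
    obtain ⟨c, hwbc, hc⟩ := hwu b
    exact ⟨c, hwbc, mem_thunkSet hu hab hc⟩⟩

lemma compDense_of_adjunction (hf : IsAppMor P.app P.filt Q.app Q.filt f)
    {G : Asm Q ⥤ Asm P} (adj : asmFunctor hf ⊣ G) : CompDense P Q f := by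
  obtain ⟨N, hN, hNtr⟩ := (adj.counit.app (subsetsAsm Q)).2
  -- `m·b = (n·b)·b` for some `n ∈ N`; the second parameter slot is unused
  obtain ⟨M, hM, hMtr⟩ := exists_tracker3 Q (.op (.op (.var 0) (.var 2)) (.var 2)) hN hN
  refine compDense_iff.2 ⟨M, hM, fun U hU => ?_⟩
  let h := adj.homEquiv _ _ (thunkHom hf hU)
  have hcounit (a : A) (c : B) (hc : c ∈ ((adj.counit.app _).1 (h.1 a)).1) :
      c ∈ thunkSet Q f U a := by
    have htri := (adj.homEquiv_apply_eq _ h).1 rfl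
    rw [adj.homEquiv_counit] at htri
    have hval : thunkSet Q f U a = ((adj.counit.app _).1 (h.1 a)).1 :=
      congrArg (fun k => (k.1 a).1) htri
    rwa [hval]
  obtain ⟨V, hV, hVtr⟩ := h.2
  refine ⟨V, hV, fun r hr a => ?_, fun r hr a a' hra hdef m hm b' hb' => ?_⟩
  · obtain ⟨a', hra', -⟩ := hVtr a a r rfl hr
    simp [hra']
  · obtain ⟨a'', hra'', hGa⟩ := hVtr a a r rfl hr
    rw [hra, Option.some.injEq] at hra''
    subst hra''
    obtain ⟨n, hn, _, _, hmn⟩ := hMtr m hm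
    obtain ⟨c, hnc, hcT⟩ := hNtr (h.1 a) b' n ⟨a', hGa, hb'⟩ hn
    obtain ⟨d, hcd, hdU⟩ := hcounit a c hcT hdef b'
    exact ⟨d, hmn b' d (by simp [Term.eval, hnc, hcd]), hdU⟩

end CompDenseOfAdjunction

/-- For an applicative morphism `f : (A,φ) → (B,ψ)`, the induced functor
`Asm(f) : Asm(A,φ) ⥤ Asm(B,ψ)` has a right adjoint iff `f` is computationally dense. -/
theorem statement18 (A B : Type) (P : PCA A) (Q : PCA B) (f : A → B → Prop)
    (hf : IsAppMor P.app P.filt Q.app Q.filt f) :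
    (∃ G : Asm Q ⥤ Asm P, Nonempty (asmFunctor hf ⊣ G)) ↔ CompDense P Q f := by
  refine ⟨fun ⟨_, ⟨adj⟩⟩ => compDense_of_adjunction hf adj, fun hd => ?_⟩
  obtain ⟨M, hM, hdM⟩ := compDense_iff.1 hd
  exact ⟨rightAdj hf hM hdM, ⟨rightAdjAdjunction hf hM hdM⟩⟩

end PcaPaper
end
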